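/- arXiv:2006.01986 — 3 statements merged into one kernel-verified Lean document; each statement's English description precedes it below -/
import Mathlib

section
/- For all p ≥ 1 and all t with 0 ≤ t ≤ 1/2, one has (1 - t²)^{-p/2} - 1 ≤ (2^p · p / 3^{p/2}) · t². -/
/-!
Put `b = √(1 - t²)`, so that the left-hand side is `b⁻ᵖ - 1 = b⁻ᵖ (1 - bᵖ)`. Bernoulli's inequality
gives `1 - bᵖ ≤ p (1 - b)`, and `1 - b ≤ 1 - b² = t²` because `b ≤ 1`. Finally `b² = 1 - t² ≥ 3/4`,
so `b⁻ᵖ ≤ (3/4)^(-p/2) = 2ᵖ / 3^(p/2)`.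
-/

open Real

theorem one_sub_rpow_le_mul_one_sub {b p : ℝ} (hb : 0 ≤ b) (hp : 1 ≤ p) :
    1 - b ^ p ≤ p * (1 - b) := by
  have := one_add_mul_self_le_rpow_one_add (by linarith : -1 ≤ b - 1) hp
  rw [add_sub_cancel] at this
  linarith

theorem rpow_neg_sub_one_le {b p : ℝ} (hb : 0 < b) (hp : 1 ≤ p) :
    b ^ (-p) - 1 ≤ p * b ^ (-p) * (1 - b) := by
  have hbp : 0 < b ^ (-p) := rpow_pos_of_pos hb _
  calc b ^ (-p) - 1 = b ^ (-p) * (1 - b ^ p) := by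
        rw [mul_one_sub, ← rpow_add hb, neg_add_cancel, rpow_zero]
    _ ≤ b ^ (-p) * (p * (1 - b)) :=
        mul_le_mul_of_nonneg_left (one_sub_rpow_le_mul_one_sub hb.le hp) hbp.le
    _ = p * b ^ (-p) * (1 - b) := by ring

theorem three_quarters_rpow_neg_half (p : ℝ) :
    (3 / 4 : ℝ) ^ (-(p / 2)) = 2 ^ p / 3 ^ (p / 2) := by
  rw [rpow_neg (by norm_num), ← inv_rpow (by norm_num), inv_div,
    div_rpow (by norm_num) (by norm_num), show (4 : ℝ) = 2 ^ (2 : ℝ) by norm_num,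
    ← rpow_mul (by norm_num)]
  ring_nf

theorem stmt2 (p t : ℝ) (hp : 1 ≤ p) (ht0 : 0 ≤ t) (ht : t ≤ 1 / 2) :
    (1 - t ^ 2) ^ (-(p / 2)) - 1 ≤ 2 ^ p * p / 3 ^ (p / 2) * t ^ 2 := by
  have hu : 3 / 4 ≤ 1 - t ^ 2 := by nlinarith
  have hu1 : 1 - t ^ 2 ≤ 1 := by nlinarith
  set b := √(1 - t ^ 2) with hb_def
  have hb0 : 0 < b := sqrt_pos.mpr (by linarith)
  have hb_sq : b ^ 2 = 1 - t ^ 2 := sq_sqrt (by linarith)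
  have hb1 : b ≤ 1 := sqrt_le_one.mpr hu1
  have hbp : b ^ (-p) = (1 - t ^ 2) ^ (-(p / 2)) := by
    rw [hb_def, sqrt_eq_rpow, ← rpow_mul (by linarith)]
    ring_nf
  have h_gap : 1 - b ≤ t ^ 2 := by nlinarith
  have h_pow : b ^ (-p) ≤ 2 ^ p / 3 ^ (p / 2) := by
    rw [hbp, ← three_quarters_rpow_neg_half]
    exact rpow_le_rpow_of_nonpos (by norm_num) hu (by linarith)
  rw [← hbp]
  calc b ^ (-p) - 1 ≤ p * b ^ (-p) * (1 - b) := rpow_neg_sub_one_le hb0 hp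
    _ ≤ p * (2 ^ p / 3 ^ (p / 2)) * t ^ 2 := by gcongr
    _ = 2 ^ p * p / 3 ^ (p / 2) * t ^ 2 := by ring
end

section
/- Let Z₁,...,Zₙ be i.i.d. with E Z² = 1 and let ζ := inf{a > 0 : E(Z²·1{|Z| ≤ a}) ≥ 1/2} < ∞. Then P(Σᵢ Zᵢ² ≤ n/4) ≤ exp(-n / (32(ζ² + ζ/12))). -/
/-!
Truncate at level `ζ`: the variables `Yᵢ = Zᵢ² 1{|Zᵢ| ≤ ζ}` are independent, take values in
`[0, ζ²]` and have mean at least `1/2`, because the defining property of `ζ` passes to the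
infimum by right-continuity of `a ↦ E[Z² 1{|Z| ≤ a}]`. As `Σ Zᵢ² ≥ Σ Yᵢ`, it remains to bound
the lower tail of `Σ Yᵢ`. For `0 ≤ Y ≤ c`, the inequality `e^{-y} ≤ 1 - y + y²/2` gives
`E e^{-tY} ≤ exp(-t (1 - t c / 2) E Y)`, and the Chernoff bound with `t = 1/(2ζ²)` yields
`exp(-n / (16 ζ²))`, which is stronger than the claim.
-/

open MeasureTheory ProbabilityTheory Real Finset Filter Topology

theorem Real.exp_neg_le_one_sub_add_sq_div_two {y : ℝ} (hy : 0 ≤ y) :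
    exp (-y) ≤ 1 - y + y ^ 2 / 2 := by
  have hquad := mul_le_mul_of_nonneg_left (quadratic_le_exp_of_nonneg hy) (exp_pos (-y)).le
  rw [← exp_add, neg_add_cancel, exp_zero] at hquad
  nlinarith [exp_pos (-y), sq_nonneg (y ^ 2)]

section Truncation

noncomputable def truncSq (a x : ℝ) : ℝ := {y : ℝ | |y| ≤ a}.indicator (· ^ 2) x

lemma measurable_truncSq (a : ℝ) : Measurable (truncSq a) :=
  (measurable_id.pow_const 2).indicator (measurableSet_le measurable_abs measurable_const)

lemma truncSq_nonneg (a x : ℝ) : 0 ≤ truncSq a x :=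
  Set.indicator_nonneg (fun y _ => sq_nonneg y) x

lemma truncSq_le_sq_right (a x : ℝ) : truncSq a x ≤ x ^ 2 :=
  Set.indicator_le_self' (fun y _ => sq_nonneg y) x

lemma truncSq_le_sq_left (a x : ℝ) : truncSq a x ≤ a ^ 2 := by
  refine Set.indicator_apply_le' (fun hx => ?_) fun _ => sq_nonneg a
  exact sq_le_sq' (neg_le_of_abs_le hx) (le_of_abs_le hx)

variable {Ω : Type*} {mΩ : MeasurableSpace Ω} {μ : Measure Ω} {X : Ω → ℝ}

lemma truncSq_comp (a : ℝ) :
    truncSq a ∘ X = {ω | |X ω| ≤ a}.indicator (fun ω => X ω ^ 2) :=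
  funext fun _ => rfl

lemma integrable_truncSq_comp [IsFiniteMeasure μ] (hX : Measurable X) (a : ℝ) :
    Integrable (truncSq a ∘ X) μ :=
  .of_mem_Icc 0 (a ^ 2) ((measurable_truncSq a).comp hX).aemeasurable
    (ae_of_all _ fun _ => ⟨truncSq_nonneg a _, truncSq_le_sq_left a _⟩)

lemma integral_truncSq_comp (hX : Measurable X) (a : ℝ) :
    ∫ ω, truncSq a (X ω) ∂μ = ∫ ω in {ω | |X ω| ≤ a}, X ω ^ 2 ∂μ := by
  rw [← integral_indicator (measurableSet_le hX.abs measurable_const), ← truncSq_comp]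
  rfl

lemma integrableOn_sq_abs_le [IsFiniteMeasure μ] (hX : Measurable X) (a : ℝ) :
    IntegrableOn (fun ω => X ω ^ 2) {ω | |X ω| ≤ a} μ := by
  rw [← integrable_indicator_iff (measurableSet_le hX.abs measurable_const), ← truncSq_comp]
  exact integrable_truncSq_comp hX a

end Truncation

section RightContinuity

variable {Ω : Type*} {mΩ : MeasurableSpace Ω} {μ : Measure Ω}

theorem le_setIntegral_le_of_forall_lt {X F : Ω → ℝ} {b m : ℝ} (hX : Measurable X)
    (hF : IntegrableOn F {ω | X ω ≤ b + 1} μ)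
    (h : ∀ a, b < a → m ≤ ∫ ω in {ω | X ω ≤ a}, F ω ∂μ) :
    m ≤ ∫ ω in {ω | X ω ≤ b}, F ω ∂μ := by
  set s : ℕ → Set Ω := fun k => {ω | X ω ≤ b + 1 / ((k : ℝ) + 1)}
  have hanti : Antitone s := fun i j hij ω (hω : X ω ≤ _) =>
    hω.trans (by gcongr b + ?_; exact Nat.one_div_le_one_div hij)
  have hinter : ⋂ k, s k = {ω | X ω ≤ b} := by
    ext ω
    simp only [s, Set.mem_iInter, Set.mem_ofPred_eq]
    refine ⟨fun hω => ?_, fun hω k => hω.trans (le_add_of_nonneg_right (by positivity))⟩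
    simpa using ge_of_tendsto' (tendsto_one_div_add_atTop_nhds_zero_nat.const_add b) hω
  have hlim := tendsto_setIntegral_of_antitone (μ := μ) (f := F)
    (fun k => measurableSet_le hX measurable_const) hanti ⟨0, by simpa [s] using hF⟩
  rw [hinter] at hlim
  exact ge_of_tendsto' hlim fun k => h _ (lt_add_of_pos_right b (by positivity))

theorem le_setIntegral_sq_abs_le_sInf [IsFiniteMeasure μ] {X : Ω → ℝ} (hX : Measurable X)
    {S : Set ℝ} {m : ℝ} (hne : S.Nonempty)
    (hS : ∀ a ∈ S, m ≤ ∫ ω in {ω | |X ω| ≤ a}, X ω ^ 2 ∂μ) :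
    m ≤ ∫ ω in {ω | |X ω| ≤ sInf S}, X ω ^ 2 ∂μ := by
  refine le_setIntegral_le_of_forall_lt hX.abs (integrableOn_sq_abs_le hX _) fun a ha => ?_
  obtain ⟨s, hsS, hsa⟩ := exists_lt_of_csInf_lt hne ha
  refine (hS s hsS).trans (setIntegral_mono_set (integrableOn_sq_abs_le hX a)
    (ae_of_all _ fun _ => sq_nonneg _) (ae_of_all _ fun ω (hω : |X ω| ≤ s) => ?_))
  exact hω.trans hsa.le

end RightContinuity

section LowerTail

variable {Ω : Type*} {mΩ : MeasurableSpace Ω} {μ : Measure Ω} [IsProbabilityMeasure μ]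

theorem mgf_neg_le_exp_of_nonneg_of_le {Y : Ω → ℝ} (hY : Measurable Y) {c t : ℝ}
    (hY0 : ∀ ω, 0 ≤ Y ω) (hYc : ∀ ω, Y ω ≤ c) (ht : 0 ≤ t) :
    mgf Y μ (-t) ≤ exp (-(t * (1 - t * c / 2)) * μ[Y]) := by
  have hYint : Integrable Y μ :=
    .of_mem_Icc 0 c hY.aemeasurable (ae_of_all _ fun ω => ⟨hY0 ω, hYc ω⟩)
  -- `Y ^ 2 ≤ c * Y` turns the quadratic Taylor bound into a linear one.
  have hpoint : ∀ ω, exp (-t * Y ω) ≤ 1 - t * (1 - t * c / 2) * Y ω := fun ω => by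
    have hsq : Y ω ^ 2 ≤ c * Y ω := by nlinarith [hY0 ω, hYc ω]
    calc exp (-t * Y ω) ≤ 1 - t * Y ω + (t * Y ω) ^ 2 / 2 := by
          rw [neg_mul]; exact exp_neg_le_one_sub_add_sq_div_two (mul_nonneg ht (hY0 ω))
      _ ≤ 1 - t * (1 - t * c / 2) * Y ω := by nlinarith [sq_nonneg t]
  calc mgf Y μ (-t) ≤ ∫ ω, (1 - t * (1 - t * c / 2) * Y ω) ∂μ :=
        integral_mono_of_nonneg (ae_of_all _ fun ω => (exp_pos _).le)
          ((integrable_const 1).sub (hYint.const_mul _)) (ae_of_all _ hpoint)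
    _ = 1 + -(t * (1 - t * c / 2)) * μ[Y] := by
        rw [integral_sub (integrable_const 1) (hYint.const_mul _), integral_const_mul]
        simp only [integral_const, probReal_univ, smul_eq_mul, mul_one]
        ring
    _ ≤ exp (-(t * (1 - t * c / 2)) * μ[Y]) := by
        linarith [add_one_le_exp (-(t * (1 - t * c / 2)) * μ[Y])]

theorem measureReal_sum_le_le_exp_of_iIndepFun {ι : Type*} {Y : ι → Ω → ℝ}
    (hindep : iIndepFun Y μ) (hmeas : ∀ i, Measurable (Y i)) (s : Finset ι) {c m : ℝ}
    (hc : 0 < c) (hY0 : ∀ i ω, 0 ≤ Y i ω) (hYc : ∀ i ω, Y i ω ≤ c) (hm : ∀ i, m ≤ μ[Y i]) :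
    μ.real {ω | ∑ i ∈ s, Y i ω ≤ #s * m / 2} ≤ exp (-(#s * m / (8 * c))) := by
  -- `t = 1 / (2c)` minimises the Chernoff exponent `t * (t * c - 1) / 2`.
  set t := 1 / (2 * c) with ht
  have htc : t * c = 1 / 2 := by rw [ht]; field_simp
  have ht0 : 0 ≤ t := by positivity
  have hmgf : ∀ i, mgf (Y i) μ (-t) ≤ exp (-(3 / 4 * t * m)) := fun i => by
    refine (mgf_neg_le_exp_of_nonneg_of_le (hmeas i) (hY0 i) (hYc i) ht0).trans ?_
    rw [htc, exp_le_exp]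
    nlinarith [hm i]
  have hint : Integrable (fun ω => exp (-t * (∑ i ∈ s, Y i) ω)) μ := by
    refine .of_mem_Icc 0 1 (by fun_prop) (ae_of_all _ fun ω => ⟨(exp_pos _).le, ?_⟩)
    rw [exp_le_one_iff, neg_mul, neg_nonpos, Finset.sum_apply]
    exact mul_nonneg ht0 (sum_nonneg fun i _ => hY0 i ω)
  calc μ.real {ω | ∑ i ∈ s, Y i ω ≤ #s * m / 2}
      ≤ exp (t * (#s * m / 2)) * mgf (∑ i ∈ s, Y i) μ (-t) := by
        simpa [Finset.sum_apply] using measure_le_le_exp_mul_mgf _ (neg_nonpos.2 ht0) hint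
    _ = exp (t * (#s * m / 2)) * ∏ i ∈ s, mgf (Y i) μ (-t) := by rw [hindep.mgf_sum hmeas]
    _ ≤ exp (t * (#s * m / 2)) * ∏ _i ∈ s, exp (-(3 / 4 * t * m)) := by
        gcongr with i
        exacts [fun _ _ => mgf_nonneg, hmgf i]
    _ = exp (-(#s * m / (8 * c))) := by
        rw [prod_const, ← exp_nat_mul, ← exp_add, ht]
        congr 1
        field_simp
        ring

end LowerTail

theorem stmt6_general {Ω : Type*} [MeasureSpace Ω] [IsProbabilityMeasure (ℙ : Measure Ω)]
    {n : ℕ} (hn : 0 < n) (Z : Fin n → Ω → ℝ)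
    (hmeas : ∀ i, Measurable (Z i))
    (hindep : iIndepFun Z ℙ)
    (hident : ∀ i, Measure.map (Z i) ℙ = Measure.map (Z ⟨0, hn⟩) ℙ)
    (S : Set ℝ)
    (hS : S = {a : ℝ | 0 < a ∧
      (1 : ℝ) / 2 ≤ ∫ ω in {ω | |Z ⟨0, hn⟩ ω| ≤ a}, (Z ⟨0, hn⟩ ω) ^ 2 ∂ℙ})
    (hne : S.Nonempty) (ζ : ℝ) (hζ : ζ = sInf S) :
    ℙ {ω | ∑ i, (Z i ω) ^ 2 ≤ (n : ℝ) / 4} ≤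
      ENNReal.ofReal (Real.exp (-(n : ℝ) / (32 * (ζ ^ 2 + ζ / 12)))) := by
  -- For `ζ = 0` the right-hand side is `exp (-n / 0) = 1`.
  rcases (hζ ▸ le_csInf hne fun a ha => (hS ▸ ha).1.le : 0 ≤ ζ).eq_or_lt with rfl | hζ_pos
  · simpa using prob_le_one
  have hmass : 1 / 2 ≤ ∫ ω in {ω | |Z ⟨0, hn⟩ ω| ≤ ζ}, Z ⟨0, hn⟩ ω ^ 2 ∂ℙ :=
    hζ ▸ le_setIntegral_sq_abs_le_sInf (hmeas _) hne fun a ha => (hS ▸ ha).2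
  have hmean : ∀ i, 1 / 2 ≤ ℙ[truncSq ζ ∘ Z i] := fun i => by
    have hid : IdentDistrib (Z i) (Z ⟨0, hn⟩) :=
      ⟨(hmeas i).aemeasurable, (hmeas _).aemeasurable, hident i⟩
    rwa [(hid.comp (measurable_truncSq ζ)).integral_eq, Function.comp_def,
      integral_truncSq_comp (hmeas _)]
  have htail := measureReal_sum_le_le_exp_of_iIndepFun
    (hindep.comp _ fun _ => measurable_truncSq ζ) (fun i => (measurable_truncSq ζ).comp (hmeas i))
    univ (by positivity) (fun _ _ => truncSq_nonneg ζ _) (fun _ _ => truncSq_le_sq_left ζ _) hmean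
  simp only [card_univ, Fintype.card_fin, Function.comp_apply] at htail
  calc ℙ {ω | ∑ i, (Z i ω) ^ 2 ≤ (n : ℝ) / 4}
      ≤ ℙ {ω | ∑ i, truncSq ζ (Z i ω) ≤ n * (1 / 2) / 2} := measure_mono fun ω hω =>
        (sum_le_sum fun i _ => truncSq_le_sq_right ζ (Z i ω)).trans (hω.trans_eq (by ring))
    _ ≤ ENNReal.ofReal (exp (-(n * (1 / 2) / (8 * ζ ^ 2)))) := by
        rw [← ofReal_measureReal]; exact ENNReal.ofReal_le_ofReal htail
    _ ≤ ENNReal.ofReal (exp (-(n : ℝ) / (32 * (ζ ^ 2 + ζ / 12)))) := by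
        gcongr
        rw [neg_div, neg_le_neg_iff, div_le_div_iff₀ (by positivity) (by positivity)]
        nlinarith [(by positivity : (0 : ℝ) ≤ n * ζ)]

theorem stmt6 {Ω : Type*} [MeasureSpace Ω] [IsProbabilityMeasure (ℙ : Measure Ω)]
    {n : ℕ} (hn : 0 < n) (Z : Fin n → Ω → ℝ)
    (hmeas : ∀ i, Measurable (Z i))
    (hindep : iIndepFun Z ℙ)
    (hident : ∀ i, Measure.map (Z i) ℙ = Measure.map (Z ⟨0, hn⟩) ℙ)
    (hmom : ∫ ω, (Z ⟨0, hn⟩ ω) ^ 2 ∂ℙ = 1)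
    (hL2 : MemLp (Z ⟨0, hn⟩) 2 ℙ)
    (S : Set ℝ)
    (hS : S = {a : ℝ | 0 < a ∧
      (1 : ℝ) / 2 ≤ ∫ ω in {ω | |Z ⟨0, hn⟩ ω| ≤ a}, (Z ⟨0, hn⟩ ω) ^ 2 ∂ℙ})
    (hne : S.Nonempty) (ζ : ℝ) (hζ : ζ = sInf S) :
    ℙ {ω | ∑ i, (Z i ω) ^ 2 ≤ (n : ℝ) / 4} ≤
      ENNReal.ofReal (Real.exp (-(n : ℝ) / (32 * (ζ ^ 2 + ζ / 12)))) :=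
  stmt6_general hn Z hmeas hindep hident S hS hne ζ hζ
end

section
/- Let X be a random variable with E|X|^{1+δ} < ∞ for some δ ≥ 1, and let g(u) = E(|X|^{1+δ}·1{|X| ≥ u}). Define αₙ = g(n^{1/4})^{1/(2+δ)} ∨ n^{-1/4}. Then αₙ → 0 and g(αₙ√n)/αₙ^{1+δ} → 0 as n → ∞. -/
/-!
The sets `{u ≤ |X|}` decrease to `∅`, so the tail moment `g u` decreases to `0`, and so does `αₙ`. Since
`αₙ ≥ n^{-1/4}`, the argument `αₙ √n` is at least `n^{1/4}`, so `g (αₙ √n) ≤ g (n^{1/4}) =: G`,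
while `αₙ ≥ G^{1/(2+δ)}` gives `G / αₙ^{1+δ} ≤ G^{1/(2+δ)} → 0`.
-/

open MeasureTheory ProbabilityTheory Filter Topology

section TailIntegral

variable {Ω : Type*} [MeasurableSpace Ω] {μ : Measure Ω} {Y f : Ω → ℝ}

theorem antitone_setIntegral_le (hf : Integrable f μ) (hf0 : 0 ≤ f) :
    Antitone fun u : ℝ => ∫ ω in {ω | u ≤ Y ω}, f ω ∂μ := fun _ _ huv =>
  setIntegral_mono_set hf.integrableOn (Eventually.of_forall hf0)
    (Eventually.of_forall fun _ hω => huv.trans hω)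

theorem tendsto_setIntegral_le_atTop (hY : Measurable Y) (hf : Integrable f μ) :
    Tendsto (fun u : ℝ => ∫ ω in {ω | u ≤ Y ω}, f ω ∂μ) atTop (𝓝 0) := by
  have hempty : ⋂ u : ℝ, {ω | u ≤ Y ω} = ∅ :=
    Set.eq_empty_of_forall_notMem fun ω hω =>
      (lt_add_one (Y ω)).not_ge (Set.mem_iInter.mp hω (Y ω + 1))
  simpa [hempty] using tendsto_setIntegral_of_antitone (s := fun u : ℝ => {ω | u ≤ Y ω})
    (fun u => measurableSet_le measurable_const hY)
    (fun _ _ huv _ hω => huv.trans hω) ⟨0, hf.integrableOn⟩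

end TailIntegral

theorem div_rpow_le_rpow_of_rpow_le {G a c p : ℝ} (hG : 0 ≤ G) (ha : 0 < a) (hp : 0 ≤ p)
    (hcp : c * (p + 1) = 1) (hGa : G ^ c ≤ a) : G / a ^ p ≤ G ^ c := by
  rw [div_le_iff₀ (Real.rpow_pos_of_pos ha p)]
  calc G = G ^ (c * (p + 1)) := by rw [hcp, Real.rpow_one]
    _ = G ^ c * (G ^ c) ^ p := by
      rw [Real.rpow_mul hG, Real.rpow_add_one' (Real.rpow_nonneg hG c) (by linarith), mul_comm]
    _ ≤ G ^ c * a ^ p := by gcongr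

section TailLevel

noncomputable def tailLevel (g : ℝ → ℝ) (c : ℝ) (n : ℕ) : ℝ :=
  max (g ((n : ℝ) ^ ((1 : ℝ) / 4)) ^ c) ((n : ℝ) ^ (-(1 : ℝ) / 4))

variable {g : ℝ → ℝ} {c : ℝ}

theorem tendsto_rpow_comp_natCast_rpow_quarter (hg : Tendsto g atTop (𝓝 0)) (hc : 0 < c) :
    Tendsto (fun n : ℕ => g ((n : ℝ) ^ ((1 : ℝ) / 4)) ^ c) atTop (𝓝 0) := by
  have hquarter : Tendsto (fun n : ℕ => (n : ℝ) ^ ((1 : ℝ) / 4)) atTop atTop :=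
    (tendsto_rpow_atTop (by norm_num)).comp tendsto_natCast_atTop_atTop
  simpa [Function.comp_def, Real.zero_rpow hc.ne'] using
    ((Real.continuousAt_rpow_const 0 c (Or.inr hc.le)).tendsto.comp (hg.comp hquarter))

theorem tendsto_tailLevel (hg : Tendsto g atTop (𝓝 0)) (hc : 0 < c) :
    Tendsto (tailLevel g c) atTop (𝓝 0) := by
  have hneg : Tendsto (fun n : ℕ => (n : ℝ) ^ (-(1 : ℝ) / 4)) atTop (𝓝 0) := by
    rw [neg_div]
    exact (tendsto_rpow_neg_atTop (by norm_num)).comp tendsto_natCast_atTop_atTop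
  exact (max_self (0 : ℝ)) ▸ (tendsto_rpow_comp_natCast_rpow_quarter hg hc).max hneg

theorem rpow_neg_quarter_le_tailLevel (n : ℕ) : (n : ℝ) ^ (-(1 : ℝ) / 4) ≤ tailLevel g c n :=
  le_max_right _ _

theorem tailLevel_pos {n : ℕ} (hn : 0 < n) : 0 < tailLevel g c n :=
  (Real.rpow_pos_of_pos (Nat.cast_pos.mpr hn) _).trans_le (rpow_neg_quarter_le_tailLevel n)

theorem rpow_quarter_le_tailLevel_mul_sqrt {n : ℕ} (hn : 0 < n) :
    (n : ℝ) ^ ((1 : ℝ) / 4) ≤ tailLevel g c n * Real.sqrt n := by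
  have hn' : (0 : ℝ) < n := Nat.cast_pos.mpr hn
  calc (n : ℝ) ^ ((1 : ℝ) / 4) = (n : ℝ) ^ (-(1 : ℝ) / 4) * Real.sqrt n := by
        rw [Real.sqrt_eq_rpow, ← Real.rpow_add hn']
        norm_num
    _ ≤ tailLevel g c n * Real.sqrt n := by
        gcongr
        exact rpow_neg_quarter_le_tailLevel n

theorem tendsto_apply_tailLevel_mul_sqrt_div (hg_anti : Antitone g) (hg0 : ∀ u, 0 ≤ g u)
    (hg : Tendsto g atTop (𝓝 0)) {p : ℝ} (hp : 0 ≤ p) (hcp : c * (p + 1) = 1) :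
    Tendsto (fun n : ℕ => g (tailLevel g c n * Real.sqrt n) / tailLevel g c n ^ p)
      atTop (𝓝 0) := by
  have hc : 0 < c := pos_of_mul_pos_left (hcp ▸ one_pos) (by linarith)
  refine squeeze_zero' (Eventually.of_forall fun n => ?_) ?_
    (tendsto_rpow_comp_natCast_rpow_quarter hg hc)
  · exact div_nonneg (hg0 _) (Real.rpow_nonneg
      ((Real.rpow_nonneg n.cast_nonneg _).trans (rpow_neg_quarter_le_tailLevel n)) p)
  · filter_upwards [eventually_gt_atTop 0] with n hn
    calc g (tailLevel g c n * Real.sqrt n) / tailLevel g c n ^ p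
        ≤ g ((n : ℝ) ^ ((1 : ℝ) / 4)) / tailLevel g c n ^ p := by
          gcongr
          · exact Real.rpow_nonneg (tailLevel_pos hn).le p
          · exact hg_anti (rpow_quarter_le_tailLevel_mul_sqrt hn)
      _ ≤ g ((n : ℝ) ^ ((1 : ℝ) / 4)) ^ c :=
          div_rpow_le_rpow_of_rpow_le (hg0 _) (tailLevel_pos hn) hp hcp (le_max_left _ _)

end TailLevel

theorem stmt18_general {Ω : Type*} [MeasureSpace Ω]
    (X : Ω → ℝ) (hX : Measurable X) (δ : ℝ) (hδ : 1 ≤ δ)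
    (hint : Integrable (fun ω => |X ω| ^ (1 + δ)) ℙ)
    (g : ℝ → ℝ) (hg : g = fun u => ∫ (ω : Ω) in {ω : Ω | u ≤ |X ω|}, |X ω| ^ (1 + δ) ∂ℙ)
    (α : ℕ → ℝ)
    (hα : α = fun n : ℕ => max (g ((n : ℝ) ^ ((1 : ℝ) / 4)) ^ ((1 : ℝ) / (2 + δ)))
      ((n : ℝ) ^ (-(1 : ℝ) / 4))) :
    Tendsto α atTop (nhds 0) ∧
      Tendsto (fun n : ℕ => g (α n * Real.sqrt n) / (α n) ^ (1 + δ)) atTop (nhds 0) := by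
  have hg_nonneg : ∀ u, 0 ≤ g u := fun u => hg ▸
    setIntegral_nonneg (measurableSet_le measurable_const hX.abs) fun ω _ => by positivity
  have hg_anti : Antitone g := hg ▸ antitone_setIntegral_le hint fun ω => by positivity
  have hg_tendsto : Tendsto g atTop (𝓝 0) := hg ▸ tendsto_setIntegral_le_atTop hX.abs hint
  subst hα
  exact ⟨tendsto_tailLevel hg_tendsto (by positivity),
    tendsto_apply_tailLevel_mul_sqrt_div hg_anti hg_nonneg hg_tendsto (by linarith)
      (by field_simp; ring)⟩

theorem stmt18 {Ω : Type*} [MeasureSpace Ω] [IsProbabilityMeasure (ℙ : Measure Ω)]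
    (X : Ω → ℝ) (hX : Measurable X) (δ : ℝ) (hδ : 1 ≤ δ)
    (hint : Integrable (fun ω => |X ω| ^ (1 + δ)) ℙ)
    (g : ℝ → ℝ) (hg : g = fun u => ∫ (ω : Ω) in {ω : Ω | u ≤ |X ω|}, |X ω| ^ (1 + δ) ∂ℙ)
    (α : ℕ → ℝ)
    (hα : α = fun n : ℕ => max (g ((n : ℝ) ^ ((1 : ℝ) / 4)) ^ ((1 : ℝ) / (2 + δ)))
      ((n : ℝ) ^ (-(1 : ℝ) / 4))) :
    Tendsto α atTop (nhds 0) ∧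
      Tendsto (fun n : ℕ => g (α n * Real.sqrt n) / (α n) ^ (1 + δ)) atTop (nhds 0) :=
  stmt18_general X hX δ hδ hint g hg α hα
end
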